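/- Let S be a set of n points in the plane with distinct y-coordinates, ordered p_1,...,p_n by increasing y. Let B be a bipath on S_i (1 ≤ i ≤ n-1) that is safe: either i = 1, or the higher of the two path-endpoints, say the top endpoint of L at p_ℓ with ℓ > r (the index of the top endpoint of R), satisfies that the open region strictly to the right of the rightmost ray from p_r through a point of S_ℓ \ S_r and strictly above the horizontal line through p_ℓ contains at least one point of S (symmetrically when R's endpoint is higher). Then B extends to a non-crossing monotone Hamiltonian cycle on S. -/

import Mathlib

open scoped BigOperators

abbrev Pt : Type := ℝ × ℝ

noncomputable section

/-- Signed cross product: positive iff `b` is strictly left of the directed line `o → a`. -/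
def xprod (o a b : Pt) : ℝ := (a.1 - o.1) * (b.2 - o.2) - (a.2 - o.2) * (b.1 - o.1)

/-- Closed straight-line segment between two points. -/
def Seg (p q : Pt) : Set Pt := segment ℝ p q

/-- Consecutive edges of a polyline given by a list of points. -/
def edgesOf (l : List Pt) : List (Pt × Pt) := l.zip l.tail

/-- The set of points covered by a polyline. -/
def polyPts (l : List Pt) : Set Pt := ⋃ e ∈ edgesOf l, Seg e.1 e.2

/-- A polyline is y-monotone: strictly increasing y-coordinates. -/
def MonoPath (l : List Pt) : Prop := l.Chain' (fun p q => p.2 < q.2)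

/-- Two segments do not cross: any common point is an endpoint of both. -/
def SegNC (e f : Pt × Pt) : Prop :=
  ∀ x : Pt, x ∈ Seg e.1 e.2 → x ∈ Seg f.1 f.2 →
    (x = e.1 ∨ x = e.2) ∧ (x = f.1 ∨ x = f.2)

/-- No two distinct segments among the edges of the two polylines cross. -/
def PolyNC (L R : List Pt) : Prop :=
  ∀ e ∈ edgesOf L ++ edgesOf R, ∀ f ∈ edgesOf L ++ edgesOf R, e ≠ f → SegNC e f

/-- The polyline `L` is (weakly) to the left of `R` at every intermediate height. -/
def LeftOf (L R : List Pt) (ps pt : Pt) : Prop :=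
  ∀ p ∈ polyPts L, ∀ q ∈ polyPts R, p.2 = q.2 → ps.2 < p.2 → p.2 < pt.2 → p.1 < q.1

/-- All points of `S` have pairwise distinct y-coordinates. -/
def DistinctY (S : Finset Pt) : Prop := ∀ p ∈ S, ∀ q ∈ S, p.2 = q.2 → p = q

/-- General position: no three distinct points of `S` are collinear. -/
def GenPos (S : Finset Pt) : Prop :=
  ∀ p ∈ S, ∀ q ∈ S, ∀ r ∈ S, p ≠ q → p ≠ r → q ≠ r → xprod p q r ≠ 0

def IsLowest (S : Finset Pt) (p : Pt) : Prop := p ∈ S ∧ ∀ q ∈ S, q ≠ p → p.2 < q.2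

def IsHighest (S : Finset Pt) (p : Pt) : Prop := p ∈ S ∧ ∀ q ∈ S, q ≠ p → q.2 < p.2

/-- Points of `S` on the boundary of the convex hull of `S`. -/
def hullPts (S : Finset Pt) : Set Pt :=
  {p | p ∈ S ∧ p ∈ frontier (convexHull ℝ (S : Set Pt))}

/-- The left envelope: hull-boundary points of `S` on or to the left of the line `ps pt`. -/
def leftEnvelope (S : Finset Pt) (ps pt : Pt) : Set Pt :=
  {p ∈ hullPts S | 0 ≤ xprod ps pt p}

/-- The right envelope: hull-boundary points of `S` on or to the right of the line `ps pt`. -/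
def rightEnvelope (S : Finset Pt) (ps pt : Pt) : Set Pt :=
  {p ∈ hullPts S | xprod ps pt p ≤ 0}

/-- A non-crossing monotone Hamiltonian cycle on `S`, given by its two monotone
paths `L` and `R` from the lowest point `ps` to the highest point `pt`. -/
structure IsNCMonoHamCycle (S : Finset Pt) (ps pt : Pt) (L R : List Pt) : Prop where
  monoL : MonoPath L
  monoR : MonoPath R
  headL : L.head? = some ps
  headR : R.head? = some ps
  lastL : L.getLast? = some pt
  lastR : R.getLast? = some pt
  nodupL : L.Nodup
  nodupR : R.Nodup
  cover : ∀ p : Pt, p ∈ S ↔ (p ∈ L ∨ p ∈ R)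
  shared : ∀ p : Pt, p ∈ L → p ∈ R → p = ps ∨ p = pt
  noncross : PolyNC L R

/-- An upward planar straight-line embedding of the digraph `(V, E)` on the pointset `S`. -/
structure IsUPSE {V : Type} (E : V → V → Prop) (S : Finset Pt) (f : V → Pt) : Prop where
  bij : Set.BijOn f Set.univ (S : Set Pt)
  upward : ∀ u v : V, E u v → (f u).2 < (f v).2
  planar : ∀ u v w z : V, E u v → E w z → (u, v) ≠ (w, z) → SegNC (f u, f v) (f w, f z)

/-- Undirected reachability in a digraph. -/
def UReach {V : Type} (E : V → V → Prop) (a b : V) : Prop :=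
  Relation.ReflTransGen (fun x y => E x y ∨ E y x) a b

/-- The digraph `E` with the edges of `W` removed. -/
def AvoidW {V : Type} (E : V → V → Prop) (W : Set (V × V)) : V → V → Prop :=
  fun a b => E a b ∧ (a, b) ∉ W

/-- `W` is an st-cutset: removing `W` leaves exactly two undirected components,
one containing `s` and one containing `t`, and every edge of `W` goes from the
`s`-side to the `t`-side. -/
def IsSTCutset {V : Type} (E : V → V → Prop) (s t : V) (W : Set (V × V)) : Prop :=
  (∀ e ∈ W, E e.1 e.2) ∧
  (∀ v : V, UReach (AvoidW E W) s v ∨ UReach (AvoidW E W) t v) ∧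
  ¬ UReach (AvoidW E W) s t ∧
  (∀ e ∈ W, UReach (AvoidW E W) s e.1 ∧ UReach (AvoidW E W) t e.2)

/-- A bipath on `Si`: two non-crossing monotone paths starting at `p1`,
internally disjoint, together covering `Si`, with `L` to the left of `R`. -/
structure IsBipath (Si : Finset Pt) (p1 : Pt) (L R : List Pt) : Prop where
  monoL : MonoPath L
  monoR : MonoPath R
  headL : L.head? = some p1
  headR : R.head? = some p1
  nodupL : L.Nodup
  nodupR : R.Nodup
  cover : ∀ p : Pt, p ∈ Si ↔ (p ∈ L ∨ p ∈ R)
  shared : ∀ p : Pt, p ∈ L → p ∈ R → p = p1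
  noncross : PolyNC L R
  leftOf : ∀ p ∈ polyPts L, ∀ q ∈ polyPts R, p.2 = q.2 → p1.2 < p.2 → p ≠ q → p.1 < q.1

/-- The bipath `(L, R)` on `Si` extends to the non-crossing monotone Hamiltonian
cycle `(L', R')` on `S`, i.e. the restriction of the cycle to `Si` is `(L, R)`. -/
def ExtendsTo (S Si : Finset Pt) (ps pt : Pt) (L R L' R' : List Pt) : Prop :=
  IsNCMonoHamCycle S ps pt L' R' ∧
  L <+: L' ∧ R <+: R' ∧
  (∀ p ∈ L', p ∈ Si ↔ p ∈ L) ∧ (∀ p ∈ R', p ∈ Si ↔ p ∈ R)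

end

/-!
Assume the top `pl` of `L` is at least as high as the top `pr` of `R` (otherwise reflect in the
vertical axis). Continue `R` from `pr` along the chain of rightmost rays (gift wrapping) up to the
highest point, and continue `L` from `pl` through all remaining points in order of height. Safety
guarantees that the first chain vertex lies above `pl`, so below `pl` the cycle is the old bipath.
Every point above a chain vertex lies weakly left of the next chain edge, strictly so by general
position; hence the new left path stays strictly left of the chain, edge by edge, and the cycle
does not cross itself.
-/

/-! ### Segments and orientation -/

lemma mem_Seg_iff {p q x : Pt} : x ∈ Seg p q ↔
    ∃ t : ℝ, 0 ≤ t ∧ t ≤ 1 ∧ x.1 = p.1 + t * (q.1 - p.1) ∧ x.2 = p.2 + t * (q.2 - p.2) := by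
  rw [Seg, segment_eq_image']
  constructor
  · rintro ⟨t, ht, rfl⟩
    exact ⟨t, ht.1, ht.2, by simp, by simp⟩
  · rintro ⟨t, h0, h1, hx1, hx2⟩
    exact ⟨t, ⟨h0, h1⟩, Prod.ext (by simp [hx1]) (by simp [hx2])⟩

lemma left_mem_Seg (p q : Pt) : p ∈ Seg p q := left_mem_segment ℝ p q

lemma right_mem_Seg (p q : Pt) : q ∈ Seg p q := right_mem_segment ℝ p q

lemma snd_bounds_of_mem_Seg {p q x : Pt} (h : x ∈ Seg p q) (hpq : p.2 ≤ q.2) :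
    p.2 ≤ x.2 ∧ x.2 ≤ q.2 := by
  obtain ⟨t, h0, h1, _, hx2⟩ := mem_Seg_iff.mp h
  constructor <;> nlinarith

lemma eq_right_of_mem_Seg {p q x : Pt} (h : x ∈ Seg p q) (hpq : p.2 < q.2) (hx : x.2 = q.2) :
    x = q := by
  obtain ⟨t, -, -, hx1, hx2⟩ := mem_Seg_iff.mp h
  obtain rfl : t = 1 := by nlinarith
  exact Prod.ext (by rw [hx1]; ring) (by rw [hx2]; ring)

lemma eq_left_of_mem_Seg {p q x : Pt} (h : x ∈ Seg p q) (hpq : p.2 < q.2) (hx : x.2 = p.2) :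
    x = p := by
  obtain ⟨t, -, -, hx1, hx2⟩ := mem_Seg_iff.mp h
  obtain rfl : t = 0 := by nlinarith
  exact Prod.ext (by rw [hx1]; ring) (by rw [hx2]; ring)

lemma exists_mem_Seg_snd_eq {p q : Pt} (hpq : p.2 < q.2) {c : ℝ} (h1 : p.2 ≤ c) (h2 : c ≤ q.2) :
    ∃ w ∈ Seg p q, w.2 = c := by
  set t := (c - p.2) / (q.2 - p.2)
  have ht : t * (q.2 - p.2) = c - p.2 := div_mul_cancel₀ _ (by linarith)
  refine ⟨(p.1 + t * (q.1 - p.1), c), mem_Seg_iff.mpr ⟨t, ?_, ?_, rfl, by linarith⟩, rfl⟩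
  · exact div_nonneg (by linarith) (by linarith)
  · exact (div_le_one (by linarith)).mpr (by linarith)

lemma mem_Seg_of_mem_Seg {p q w x : Pt} (hw : w ∈ Seg p q) (hx : x ∈ Seg p q) (hpq : p.2 < q.2)
    (hwx : w.2 ≤ x.2) : x ∈ Seg w q := by
  obtain ⟨s, hs0, hs1, hw1, hw2⟩ := mem_Seg_iff.mp hw
  obtain ⟨t, ht0, ht1, hx1, hx2⟩ := mem_Seg_iff.mp hx
  have hst : s ≤ t := by nlinarith
  rcases eq_or_lt_of_le hs1 with rfl | hs1
  · rw [eq_right_of_mem_Seg hx hpq (by nlinarith)]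
    exact right_mem_Seg _ _
  · have hu : (t - s) / (1 - s) * (1 - s) = t - s := div_mul_cancel₀ _ (by linarith)
    refine mem_Seg_iff.mpr ⟨(t - s) / (1 - s), div_nonneg (by linarith) (by linarith),
      (div_le_one (by linarith)).mpr (by linarith), ?_, ?_⟩
    · rw [hx1, hw1]; linear_combination (p.1 - q.1) * hu
    · rw [hx2, hw2]; linear_combination (p.2 - q.2) * hu

lemma xprod_self_left (o a : Pt) : xprod o a o = 0 := by simp [xprod]

lemma xprod_eq_of_mem_Seg {c m x y : Pt} (hy : y ∈ Seg c m) (hxy : x.2 = y.2) :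
    xprod c m x = (m.2 - c.2) * (y.1 - x.1) := by
  obtain ⟨t, -, -, hy1, hy2⟩ := mem_Seg_iff.mp hy
  simp only [xprod]
  rw [hxy, hy2, hy1]; ring

lemma fst_lt_of_xprod_pos {c m x y : Pt} (hy : y ∈ Seg c m) (hcm : c.2 < m.2) (hxy : x.2 = y.2)
    (h : 0 < xprod c m x) : x.1 < y.1 := by
  rw [xprod_eq_of_mem_Seg hy hxy] at h
  nlinarith

/-- `xprod o a` is affine along the segment. -/
lemma xprod_pos_of_mem_Seg {o a p q x : Pt} (hx : x ∈ Seg p q)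
    (hp : 0 ≤ xprod o a p) (hq : 0 ≤ xprod o a q) (hpq : 0 < xprod o a p ∨ 0 < xprod o a q)
    (hxp : xprod o a p = 0 → x ≠ p) (hxq : xprod o a q = 0 → x ≠ q) : 0 < xprod o a x := by
  obtain ⟨t, h0, h1, hx1, hx2⟩ := mem_Seg_iff.mp hx
  have hval : xprod o a x = (1 - t) * xprod o a p + t * xprod o a q := by
    simp only [xprod, hx1, hx2]; ring
  have ht0 : t = 0 → x = p := fun ht => Prod.ext (by simp [hx1, ht]) (by simp [hx2, ht])
  have ht1 : t = 1 → x = q := fun ht => Prod.ext (by rw [hx1, ht]; ring) (by rw [hx2, ht]; ring)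
  rw [hval]
  rcases hp.eq_or_lt with hp0 | hp0
  · have : 0 < t := h0.lt_of_ne fun ht => hxp hp0.symm (ht0 ht.symm)
    rcases hpq with hpq | hpq
    · linarith
    · rw [← hp0]; nlinarith
  · rcases hq.eq_or_lt with hq0 | hq0
    · have : t < 1 := h1.lt_of_ne fun ht => hxq hq0.symm (ht1 ht)
      rw [← hq0]; nlinarith
    · rcases h1.lt_or_eq with h1 | rfl
      · nlinarith [mul_pos (sub_pos.2 h1) hp0, mul_nonneg h0 hq0.le]
      · linarith

/-! ### Polylines -/

@[simp] lemma edgesOf_nil : edgesOf [] = [] := rfl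

@[simp] lemma edgesOf_singleton (a : Pt) : edgesOf [a] = [] := rfl

@[simp] lemma edgesOf_cons_cons (a b : Pt) (t : List Pt) :
    edgesOf (a :: b :: t) = (a, b) :: edgesOf (b :: t) := rfl

lemma mem_polyPts {l : List Pt} {x : Pt} : x ∈ polyPts l ↔ ∃ e ∈ edgesOf l, x ∈ Seg e.1 e.2 := by
  simp [polyPts]

lemma mem_of_mem_edgesOf {l : List Pt} {e : Pt × Pt} (h : e ∈ edgesOf l) :
    e.1 ∈ l ∧ e.2 ∈ l := by
  induction l with
  | nil => simp at h
  | cons a t ih =>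
    cases t with
    | nil => simp at h
    | cons b t' =>
      rcases List.mem_cons.mp h with rfl | h
      · simp
      · exact (ih h).imp (List.mem_cons_of_mem _) (List.mem_cons_of_mem _)

lemma edgesOf_append {A B : List Pt} {a : Pt} (h : A.getLast? = some a) :
    edgesOf (A ++ B) = edgesOf A ++ edgesOf (a :: B) := by
  induction A with
  | nil => simp at h
  | cons x t ih =>
    cases t with
    | nil => simp_all
    | cons y t' =>
      rw [List.getLast?_cons_cons] at h
      simp only [List.cons_append] at ih ⊢
      rw [edgesOf_cons_cons, edgesOf_cons_cons, ih h, List.cons_append]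

lemma polyPts_append {A B : List Pt} {a : Pt} (h : A.getLast? = some a) :
    polyPts (A ++ B) = polyPts A ∪ polyPts (a :: B) := by
  ext x
  simp only [Set.mem_union, mem_polyPts, edgesOf_append h, List.mem_append]
  constructor
  · rintro ⟨e, he | he, hx⟩
    exacts [Or.inl ⟨e, he, hx⟩, Or.inr ⟨e, he, hx⟩]
  · rintro (⟨e, he, hx⟩ | ⟨e, he, hx⟩)
    exacts [⟨e, Or.inl he, hx⟩, ⟨e, Or.inr he, hx⟩]

lemma polyPts_singleton (a : Pt) : polyPts [a] = ∅ := by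
  simp [polyPts]

lemma polyPts_cons_cons (a b : Pt) (t : List Pt) :
    polyPts (a :: b :: t) = Seg a b ∪ polyPts (b :: t) := by
  ext x
  simp [mem_polyPts]

lemma mem_polyPts_of_mem {l : List Pt} {x y : Pt} (hx : x ∈ l) (hy : y ∈ l) (hxy : x ≠ y) :
    x ∈ polyPts l := by
  induction l generalizing y with
  | nil => simp at hx
  | cons a t ih =>
    cases t with
    | nil => simp_all
    | cons b t' =>
      have hab : x = a ∨ x = b → x ∈ polyPts (a :: b :: t') := by
        rintro (rfl | rfl)
        exacts [mem_polyPts.mpr ⟨(x, b), by simp, left_mem_Seg _ _⟩,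
          mem_polyPts.mpr ⟨(a, x), by simp, right_mem_Seg _ _⟩]
      rcases List.mem_cons.mp hx with hxa | hx
      · exact hab (Or.inl hxa)
      · by_cases hxb : x = b
        · exact hab (Or.inr hxb)
        · obtain ⟨e, he, hxe⟩ := mem_polyPts.mp (ih hx List.mem_cons_self hxb)
          exact mem_polyPts.mpr ⟨e, List.mem_cons_of_mem _ he, hxe⟩

namespace MonoPath

lemma pairwise {l : List Pt} (h : MonoPath l) : l.Pairwise (fun p q : Pt => p.2 < q.2) :=
  have : Trans (fun p q : Pt => p.2 < q.2) (fun p q : Pt => p.2 < q.2)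
      (fun p q : Pt => p.2 < q.2) := ⟨lt_trans⟩
  List.isChain_iff_pairwise.mp h

lemma nodup {l : List Pt} (h : MonoPath l) : l.Nodup :=
  h.pairwise.imp fun hlt he => (he ▸ hlt).false

lemma tail {a : Pt} {l : List Pt} (h : MonoPath (a :: l)) : MonoPath l := List.IsChain.tail h

lemma append {l A : List Pt} {a : Pt} (hl : MonoPath l) (hA : MonoPath A)
    (hlast : l.getLast? = some a) (habove : ∀ x ∈ A, a.2 < x.2) : MonoPath (l ++ A) :=
  List.IsChain.append hl hA fun x hx y hy => by
    rw [hlast, Option.mem_some_iff] at hx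
    exact hx ▸ habove y (List.mem_of_mem_head? hy)

lemma head_le {l : List Pt} {a x : Pt} (h : MonoPath l) (ha : l.head? = some a) (hx : x ∈ l) :
    a.2 ≤ x.2 := by
  obtain ⟨t, rfl⟩ := List.head?_eq_some_iff.mp ha
  rcases List.mem_cons.mp hx with rfl | hx
  · exact le_rfl
  · exact (List.rel_of_pairwise_cons h.pairwise hx).le

lemma le_last {l : List Pt} {b x : Pt} (h : MonoPath l) (hb : l.getLast? = some b) (hx : x ∈ l) :
    x.2 ≤ b.2 := by
  obtain ⟨ys, rfl⟩ := List.getLast?_eq_some_iff.mp hb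
  rcases List.mem_append.mp hx with hx | hx
  · exact ((List.pairwise_append.mp h.pairwise).2.2 x hx b (List.mem_singleton_self b)).le
  · rw [List.mem_singleton.mp hx]

lemma edge_lt {l : List Pt} {e : Pt × Pt} (h : MonoPath l) (he : e ∈ edgesOf l) :
    e.1.2 < e.2.2 := by
  induction l with
  | nil => simp at he
  | cons a t ih =>
    cases t with
    | nil => simp at he
    | cons b t' =>
      rcases List.mem_cons.mp he with rfl | he
      · exact (List.isChain_cons_cons.mp h).1
      · exact ih h.tail he

lemma head_le_of_mem_polyPts {l : List Pt} {a x : Pt} (h : MonoPath l) (ha : l.head? = some a)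
    (hx : x ∈ polyPts l) : a.2 ≤ x.2 := by
  obtain ⟨e, he, hxe⟩ := mem_polyPts.mp hx
  exact (h.head_le ha (mem_of_mem_edgesOf he).1).trans
    (snd_bounds_of_mem_Seg hxe (h.edge_lt he).le).1

lemma le_last_of_mem_polyPts {l : List Pt} {b x : Pt} (h : MonoPath l)
    (hb : l.getLast? = some b) (hx : x ∈ polyPts l) : x.2 ≤ b.2 := by
  obtain ⟨e, he, hxe⟩ := mem_polyPts.mp hx
  exact (snd_bounds_of_mem_Seg hxe (h.edge_lt he).le).2.trans
    (h.le_last hb (mem_of_mem_edgesOf he).2)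

lemma eq_singleton {l : List Pt} {a : Pt} (h : MonoPath l) (ha : l.head? = some a)
    (hl : l.getLast? = some a) : l = [a] := by
  obtain ⟨t, rfl⟩ := List.head?_eq_some_iff.mp ha
  cases t with
  | nil => rfl
  | cons b t =>
    have := h.le_last hl (List.mem_cons_of_mem _ List.mem_cons_self)
    linarith [(List.isChain_cons_cons.mp h).1]

lemma eq_pair_of_mem_edgesOf {l : List Pt} {a b : Pt} (h : MonoPath l) (ha : l.head? = some a)
    (hb : l.getLast? = some b) (he : (a, b) ∈ edgesOf l) : l = [a, b] := by
  obtain ⟨t, rfl⟩ := List.head?_eq_some_iff.mp ha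
  cases t with
  | nil => simp at he
  | cons c t =>
    rcases List.mem_cons.mp he with hac | he
    · obtain rfl : b = c := (Prod.ext_iff.mp hac).2
      rw [List.getLast?_cons_cons] at hb
      rw [h.tail.eq_singleton rfl hb]
    · have := List.rel_of_pairwise_cons h.pairwise (mem_of_mem_edgesOf he).1
      exact absurd this (lt_irrefl _)

lemma edges_disjoint {l : List Pt} (h : MonoPath l) {e f : Pt × Pt} (he : e ∈ edgesOf l)
    (hf : f ∈ edgesOf l) (hef : e ≠ f) : e.2.2 ≤ f.1.2 ∨ f.2.2 ≤ e.1.2 := by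
  induction l with
  | nil => simp at he
  | cons a t ih =>
    cases t with
    | nil => simp at he
    | cons b t' =>
      rcases List.mem_cons.mp he with rfl | he <;> rcases List.mem_cons.mp hf with rfl | hf
      · exact absurd rfl hef
      · exact Or.inl (h.tail.head_le rfl (mem_of_mem_edgesOf hf).1)
      · exact Or.inr (h.tail.head_le rfl (mem_of_mem_edgesOf he).1)
      · exact ih h.tail he hf

end MonoPath

lemma mem_polyPts_of_mem_polyPts_append {l A : List Pt} {a x : Pt} (hl : l.getLast? = some a)
    (hA : MonoPath (a :: A)) (hx : x ∈ polyPts (l ++ A)) (hxa : x.2 < a.2) : x ∈ polyPts l := by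
  rw [polyPts_append hl] at hx
  exact hx.resolve_right fun hx => (hxa.trans_le (hA.head_le_of_mem_polyPts rfl hx)).false

lemma segNC_of_snd_le {e f : Pt × Pt} (he : e.1.2 < e.2.2) (hf : f.1.2 < f.2.2)
    (h : e.2.2 ≤ f.1.2) : SegNC e f := by
  intro x hxe hxf
  have h1 := snd_bounds_of_mem_Seg hxe he.le
  have h2 := snd_bounds_of_mem_Seg hxf hf.le
  exact ⟨Or.inr (eq_right_of_mem_Seg hxe he (by linarith)),
    Or.inl (eq_left_of_mem_Seg hxf hf (by linarith))⟩

lemma SegNC.symm {e f : Pt × Pt} (h : SegNC e f) : SegNC f e := fun x hf he => (h x he hf).symm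

lemma MonoPath.segNC {l : List Pt} (h : MonoPath l) {e f : Pt × Pt} (he : e ∈ edgesOf l)
    (hf : f ∈ edgesOf l) (hef : e ≠ f) : SegNC e f := by
  rcases h.edges_disjoint he hf hef with hle | hle
  · exact segNC_of_snd_le (h.edge_lt he) (h.edge_lt hf) hle
  · exact (segNC_of_snd_le (h.edge_lt hf) (h.edge_lt he) hle).symm

lemma PolyNC.self {l : List Pt} (h : MonoPath l) : PolyNC l l := by
  intro e he f hf
  simp only [List.mem_append, or_self] at he hf
  exact h.segNC he hf

lemma segNC_of_sep {p1 ptop : Pt} {A B : List Pt} (hA : MonoPath A) (hB : MonoPath B)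
    (hA1 : A.head? = some p1) (hB1 : B.head? = some p1)
    (hA2 : A.getLast? = some ptop) (hB2 : B.getLast? = some ptop)
    (sep : ∀ x ∈ polyPts A, ∀ y ∈ polyPts B, x.2 = y.2 → p1.2 < x.2 → x.2 < ptop.2 → x.1 < y.1)
    {e f : Pt × Pt} (he : e ∈ edgesOf A) (hf : f ∈ edgesOf B) : SegNC e f := by
  intro x hxe hxf
  have hxA : x ∈ polyPts A := mem_polyPts.mpr ⟨e, he, hxe⟩
  have hxB : x ∈ polyPts B := mem_polyPts.mpr ⟨f, hf, hxf⟩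
  have hbe := snd_bounds_of_mem_Seg hxe (hA.edge_lt he).le
  have hbf := snd_bounds_of_mem_Seg hxf (hB.edge_lt hf).le
  have h1e := hA.head_le hA1 (mem_of_mem_edgesOf he).1
  have h1f := hB.head_le hB1 (mem_of_mem_edgesOf hf).1
  have h2e := hA.le_last hA2 (mem_of_mem_edgesOf he).2
  have h2f := hB.le_last hB2 (mem_of_mem_edgesOf hf).2
  rcases (hA.head_le_of_mem_polyPts hA1 hxA).eq_or_lt with hbot | hbot
  · exact ⟨Or.inl (eq_left_of_mem_Seg hxe (hA.edge_lt he) (by linarith)),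
      Or.inl (eq_left_of_mem_Seg hxf (hB.edge_lt hf) (by linarith))⟩
  rcases (hA.le_last_of_mem_polyPts hA2 hxA).eq_or_lt with htop | htop
  · exact ⟨Or.inr (eq_right_of_mem_Seg hxe (hA.edge_lt he) (by linarith)),
      Or.inr (eq_right_of_mem_Seg hxf (hB.edge_lt hf) (by linarith))⟩
  exact absurd (sep x hxA x hxB rfl hbot htop) (lt_irrefl _)

lemma PolyNC.of_sep {p1 ptop : Pt} {A B : List Pt} (hA : MonoPath A) (hB : MonoPath B)
    (hA1 : A.head? = some p1) (hB1 : B.head? = some p1)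
    (hA2 : A.getLast? = some ptop) (hB2 : B.getLast? = some ptop)
    (sep : ∀ x ∈ polyPts A, ∀ y ∈ polyPts B, x.2 = y.2 → p1.2 < x.2 → x.2 < ptop.2 → x.1 < y.1) :
    PolyNC A B := by
  intro e he f hf hef
  rcases List.mem_append.mp he with he | he <;> rcases List.mem_append.mp hf with hf | hf
  · exact hA.segNC he hf hef
  · exact segNC_of_sep hA hB hA1 hB1 hA2 hB2 sep he hf
  · exact (segNC_of_sep hA hB hA1 hB1 hA2 hB2 sep hf he).symm
  · exact hB.segNC he hf hef

/-! ### Gift wrapping -/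

lemma IsHighest.snd_le {S : Finset Pt} {p q : Pt} (h : IsHighest S p) (hq : q ∈ S) : q.2 ≤ p.2 := by
  rcases eq_or_ne q p with rfl | hqp
  exacts [le_rfl, (h.2 q hq hqp).le]

/-- The rightmost ray maximises the inverse slope `(q.1 - o.1) / (q.2 - o.2)`. -/
lemma exists_rightmost {o : Pt} {T : Finset Pt} (hT : T.Nonempty) (habove : ∀ q ∈ T, o.2 < q.2) :
    ∃ m ∈ T, ∀ q ∈ T, 0 ≤ xprod o m q := by
  obtain ⟨m, hm, hmax⟩ := T.exists_max_image (fun q => (q.1 - o.1) / (q.2 - o.2)) hT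
  refine ⟨m, hm, fun q hq => ?_⟩
  have key := hmax q hq
  rw [div_le_div_iff₀ (sub_pos.mpr (habove q hq)) (sub_pos.mpr (habove m hm))] at key
  simp only [xprod]
  linarith

/-- `c :: ch` is the chain of rightmost rays from `c` up to `ptop`. -/
inductive IsWrapChain (S : Finset Pt) (ptop : Pt) : Pt → List Pt → Prop
  | nil : IsWrapChain S ptop ptop []
  | cons {c m : Pt} {tl : List Pt} (hm : m ∈ S) (hcm : c.2 < m.2)
      (hwrap : ∀ q ∈ S, c.2 < q.2 → 0 ≤ xprod c m q)
      (htl : IsWrapChain S ptop m tl) : IsWrapChain S ptop c (m :: tl)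

namespace IsWrapChain

variable {S : Finset Pt} {ptop : Pt}

theorem exists_of_mem (hT : IsHighest S ptop) {c : Pt} (hc : c ∈ S) :
    ∃ ch, IsWrapChain S ptop c ch := by
  by_cases hne : (S.filter fun q => c.2 < q.2).Nonempty
  · obtain ⟨m, hm, hwrap⟩ := exists_rightmost hne fun q hq => (Finset.mem_filter.mp hq).2
    have hm' := Finset.mem_filter.mp hm
    obtain ⟨tl, htl⟩ := exists_of_mem hT hm'.1
    exact ⟨m :: tl, .cons hm'.1 hm'.2
      (fun q hq hcq => hwrap q (Finset.mem_filter.mpr ⟨hq, hcq⟩)) htl⟩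
  · obtain rfl : c = ptop := by
      by_contra hcT
      exact hne ⟨ptop, Finset.mem_filter.mpr ⟨hT.1, hT.2 c hc hcT⟩⟩
    exact ⟨[], .nil⟩
termination_by (S.filter fun q => c.2 < q.2).card
decreasing_by
  refine Finset.card_lt_card ((Finset.ssubset_iff_of_subset fun q hq => ?_).mpr ⟨m, hm, ?_⟩)
  · rw [Finset.mem_filter] at hq ⊢
    exact ⟨hq.1, hm'.2.trans hq.2⟩
  · simp

lemma mem {c : Pt} {ch : List Pt} (h : IsWrapChain S ptop c ch) {x : Pt} (hx : x ∈ ch) :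
    x ∈ S ∧ c.2 < x.2 := by
  induction h with
  | nil => simp at hx
  | cons hm hcm _ _ ih =>
    rcases List.mem_cons.mp hx with rfl | hx
    · exact ⟨hm, hcm⟩
    · exact (ih hx).imp_right hcm.trans

lemma monoPath {c : Pt} {ch : List Pt} (h : IsWrapChain S ptop c ch) : MonoPath (c :: ch) := by
  induction h with
  | nil => exact List.isChain_singleton _
  | cons _ hcm _ _ ih => exact List.isChain_cons_cons.mpr ⟨hcm, ih⟩

lemma getLast? {c : Pt} {ch : List Pt} (h : IsWrapChain S ptop c ch) :
    (c :: ch).getLast? = some ptop := by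
  induction h with
  | nil => rfl
  | cons _ _ _ _ ih => rwa [List.getLast?_cons_cons]

lemma getLast?_of_ne {c : Pt} {ch : List Pt} (h : IsWrapChain S ptop c ch) (hc : c ≠ ptop) :
    ch.getLast? = some ptop := by
  cases h with
  | nil => exact absurd rfl hc
  | cons _ _ _ htl => exact htl.getLast?

lemma eq_nil (hT : IsHighest S ptop) {ch : List Pt} (h : IsWrapChain S ptop ptop ch) : ch = [] := by
  cases h with
  | nil => rfl
  | cons hm hcm _ _ => exact absurd (hT.snd_le hm) (not_le.mpr hcm)

end IsWrapChain

lemma xprod_pos_of_wrap {S : Finset Pt} (hgp : GenPos S) {c m w : Pt} (hc : c ∈ S) (hm : m ∈ S)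
    (hcm : c.2 < m.2) (hwrap : ∀ q ∈ S, c.2 < q.2 → 0 ≤ xprod c m q)
    (hw : w ∈ S) (hcw : c.2 < w.2) (hwm : w ≠ m) : 0 < xprod c m w :=
  (hwrap w hw hcw).lt_of_ne (hgp c hc m hm w hw (ne_of_apply_ne Prod.snd hcm.ne)
    (ne_of_apply_ne Prod.snd hcw.ne) hwm.symm).symm

/-- Cut the edge of `L` through `x` at height `c.2`: both ends of the upper part are weakly left of
the line `c m`, and not both on it. -/
lemma xprod_pos_of_mem_polyPts_of_wrap {S : Finset Pt} (hy : DistinctY S) (hgp : GenPos S)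
    {p1 ptop : Pt} {L : List Pt} (hL : MonoPath L)
    (hhead : L.head? = some p1) (hlast : L.getLast? = some ptop) (hLS : ∀ w ∈ L, w ∈ S)
    {c m : Pt} (hc : c ∈ S) (hm : m ∈ S) (hcm : c.2 < m.2)
    (hwrap : ∀ q ∈ S, c.2 < q.2 → 0 ≤ xprod c m q)
    (hmL : m ∈ L → m = ptop) (hcL : c = p1 ∨ c ∉ L)
    (hdeg : c = p1 → m = ptop → (p1, ptop) ∉ edgesOf L)
    (hbase : ∀ x ∈ polyPts L, x.2 = c.2 → p1.2 < x.2 → 0 < xprod c m x)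
    {x : Pt} (hx : x ∈ polyPts L) (hcx : c.2 ≤ x.2) (h1x : p1.2 < x.2) (hxT : x.2 < ptop.2) :
    0 < xprod c m x := by
  obtain ⟨⟨u, v⟩, huv, hxuv⟩ := mem_polyPts.mp hx
  have huv_lt : u.2 < v.2 := hL.edge_lt huv
  obtain ⟨huL, hvL⟩ := mem_of_mem_edgesOf huv
  have hxb := snd_bounds_of_mem_Seg hxuv huv_lt.le
  have hu1 : p1.2 ≤ u.2 := hL.head_le hhead huL
  have hxT' : x ≠ ptop := ne_of_apply_ne Prod.snd hxT.ne
  have hcv : c.2 < v.2 := by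
    refine (hcx.trans hxb.2).lt_of_ne fun hcv => ?_
    obtain rfl : v = c := hy v (hLS v hvL) c hc hcv.symm
    rcases hcL with rfl | hcL
    exacts [absurd (hL.head_le hhead huL) (not_le.mpr huv_lt), hcL hvL]
  have hv : 0 ≤ xprod c m v ∧ (xprod c m v = 0 → x ≠ v) := by
    refine ⟨hwrap v (hLS v hvL) hcv, fun hv0 hxv => ?_⟩
    subst hxv
    exact (xprod_pos_of_wrap hgp hc hm hcm hwrap (hLS x hvL) hcv
      fun hxm => hxT' (hxm.trans (hmL (hxm ▸ hvL)))).ne' hv0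
  suffices ∃ w, x ∈ Seg w v ∧ 0 ≤ xprod c m w ∧ (xprod c m w = 0 → x ≠ w) ∧
      (0 < xprod c m w ∨ 0 < xprod c m v) by
    obtain ⟨w, hxw, hw0, hwx, hpos⟩ := this
    exact xprod_pos_of_mem_Seg hxw hw0 hv.1 hpos hwx hv.2
  rcases lt_trichotomy u.2 c.2 with hu | hu | hu
  · obtain ⟨w, hw, hwc⟩ := exists_mem_Seg_snd_eq huv_lt hu.le hcv.le
    have hw0 := hbase w (mem_polyPts.mpr ⟨_, huv, hw⟩) hwc (by linarith)
    exact ⟨w, mem_Seg_of_mem_Seg hw hxuv huv_lt (hwc ▸ hcx), hw0.le,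
      fun h => absurd h hw0.ne', Or.inl hw0⟩
  · obtain rfl : u = c := hy u (hLS u huL) c hc hu
    obtain rfl : u = p1 := hcL.resolve_right (not_not.mpr huL)
    refine ⟨u, hxuv, (xprod_self_left _ _).ge, fun _ hxu => (hxu ▸ h1x).false, Or.inr ?_⟩
    refine hv.1.lt_of_ne fun hv0 => ?_
    by_cases hvm : v = m
    · subst hvm
      exact hdeg rfl (hmL hvL) (hmL hvL ▸ huv)
    · exact (xprod_pos_of_wrap hgp hc hm hcm hwrap (hLS v hvL) hcv hvm).ne' hv0.symm
  · have hu0 := xprod_pos_of_wrap hgp hc hm hcm hwrap (hLS u huL) hu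
      fun hum => absurd (hum.trans (hmL (hum ▸ huL)))
        (ne_of_apply_ne Prod.snd (huv_lt.trans_le (hL.le_last hlast hvL)).ne)
    exact ⟨u, hxuv, hu0.le, fun h => absurd h hu0.ne', Or.inl hu0⟩

/-- Along the chain, `hbase` at the next vertex comes from the previous edge. -/
lemma IsWrapChain.fst_lt_of_mem_polyPts {S : Finset Pt} (hy : DistinctY S) (hgp : GenPos S)
    {p1 ptop : Pt} (hT : IsHighest S ptop) {L : List Pt} (hL : MonoPath L)
    (hhead : L.head? = some p1) (hlast : L.getLast? = some ptop) (hLS : ∀ w ∈ L, w ∈ S)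
    {c : Pt} {ch : List Pt} (hch : IsWrapChain S ptop c ch) (hc : c ∈ S)
    (hdis : ∀ w ∈ ch, w ∈ L → w = ptop) (hcL : c = p1 ∨ c ∉ L)
    (hdeg : (p1, ptop) ∈ edgesOf L → (p1, ptop) ∉ edgesOf (c :: ch))
    (hbase : ∀ x ∈ polyPts L, x.2 = c.2 → p1.2 < x.2 → x.1 < c.1)
    {x y : Pt} (hx : x ∈ polyPts L) (hyC : y ∈ polyPts (c :: ch)) (hxy : x.2 = y.2)
    (h1x : p1.2 < x.2) (hxT : x.2 < ptop.2) : x.1 < y.1 := by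
  induction hch with
  | nil => simp [polyPts_singleton] at hyC
  | @cons c m tl hm hcm hwrap htl ih =>
    have hleft : ∀ x ∈ polyPts L, c.2 ≤ x.2 → p1.2 < x.2 → x.2 < ptop.2 → 0 < xprod c m x := by
      refine fun x hx hcx h1x hxT => xprod_pos_of_mem_polyPts_of_wrap hy hgp hL hhead hlast hLS
        hc hm hcm hwrap (hdis m List.mem_cons_self) hcL
        (fun hc1 hmT hp => hdeg hp (by simp [hc1, hmT])) (fun x hx hxc h1x => ?_) hx hcx h1x hxT
      rw [xprod_eq_of_mem_Seg (left_mem_Seg c m) hxc]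
      exact mul_pos (sub_pos.2 hcm) (sub_pos.2 (hbase x hx hxc h1x))
    rw [polyPts_cons_cons] at hyC
    rcases hyC with hyC | hyC
    · exact fst_lt_of_xprod_pos hyC hcm hxy
        (hleft x hx (hxy ▸ (snd_bounds_of_mem_Seg hyC hcm.le).1) h1x hxT)
    · rcases eq_or_ne m ptop with rfl | hmT
      · rw [htl.eq_nil hT, polyPts_singleton] at hyC
        exact absurd hyC (Set.notMem_empty y)
      · have hmT' := hT.2 m hm hmT
        refine ih hm (fun w hw => hdis w (List.mem_cons_of_mem _ hw))
          (Or.inr fun hmL => hmT (hdis m List.mem_cons_self hmL))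
          (fun hp hp' => hdeg hp (List.mem_cons_of_mem _ hp')) (fun x hx hxm h1x => ?_) hyC
        exact fst_lt_of_xprod_pos (right_mem_Seg c m) hcm hxm
          (hleft x hx (hxm ▸ hcm.le) h1x (hxm ▸ hmT'))

/-! ### Extending a bipath -/

lemma MonoPath.getLast?_eq_of_isHighest {S : Finset Pt} {l : List Pt} {ptop : Pt} (h : MonoPath l)
    (hT : IsHighest S ptop) (hlS : ∀ w ∈ l, w ∈ S) (hmem : ptop ∈ l) : l.getLast? = some ptop := by
  have hb := List.getLast?_eq_some_getLast (List.ne_nil_of_mem hmem)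
  rw [hb]
  by_contra hbT
  exact absurd (h.le_last hb hmem) (not_le.mpr (hT.2 _ (hlS _ (List.mem_of_getLast? hb))
    fun h => hbT (congrArg some h)))

lemma DistinctY.mono {S T : Finset Pt} (h : DistinctY S) (hTS : T ⊆ S) : DistinctY T :=
  fun p hp q hq => h p (hTS hp) q (hTS hq)

lemma DistinctY.exists_monoPath {T : Finset Pt} (hT : DistinctY T) :
    ∃ l : List Pt, MonoPath l ∧ ∀ p, p ∈ l ↔ p ∈ T := by
  set l := T.toList.mergeSort fun p q => decide (p.2 ≤ q.2)
  have hmem : ∀ p, p ∈ l ↔ p ∈ T := fun p => List.mem_mergeSort.trans (Finset.mem_toList)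
  have hsorted : l.Pairwise fun p q => decide (p.2 ≤ q.2) := by
    refine List.pairwise_mergeSort (fun a b c hab hbc => ?_) (fun a b => ?_) _
    · simp only [decide_eq_true_eq] at hab hbc ⊢
      exact hab.trans hbc
    · simpa using le_total a.2 b.2
  have hnd : l.Nodup := (List.mergeSort_perm _ _).nodup_iff.mpr T.nodup_toList
  refine ⟨l, List.Pairwise.isChain ((hsorted.and hnd).imp_of_mem ?_), hmem⟩
  rintro a b ha hb ⟨hab, hne⟩
  exact (decide_eq_true_eq.mp hab).lt_of_ne
    fun h => hne (hT a ((hmem a).mp ha) b ((hmem b).mp hb) h)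

namespace IsBipath

variable {Si : Finset Pt} {p1 : Pt} {L R : List Pt}

lemma mem_of_mem_left (hB : IsBipath Si p1 L R) {w : Pt} (hw : w ∈ L) : w ∈ Si :=
  (hB.cover w).mpr (Or.inl hw)

lemma mem_of_mem_right (hB : IsBipath Si p1 L R) {w : Pt} (hw : w ∈ R) : w ∈ Si :=
  (hB.cover w).mpr (Or.inr hw)

lemma snd_le_of_mem (hB : IsBipath Si p1 L R) {pl pr : Pt} (hpl : L.getLast? = some pl)
    (hpr : R.getLast? = some pr) (hprpl : pr.2 ≤ pl.2) {q : Pt} (hq : q ∈ Si) : q.2 ≤ pl.2 := by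
  rcases (hB.cover q).mp hq with hq | hq
  exacts [hB.monoL.le_last hpl hq, (hB.monoR.le_last hpr hq).trans hprpl]

lemma fst_lt (hB : IsBipath Si p1 L R) {x y : Pt} (hx : x ∈ polyPts L) (hy : y ∈ polyPts R)
    (hxy : x.2 = y.2) (h1x : p1.2 < x.2) : x.1 < y.1 := by
  refine hB.leftOf x hx y hy hxy h1x fun hxy' => ?_
  subst hxy'
  obtain ⟨e, he, hxe⟩ := mem_polyPts.mp hx
  obtain ⟨f, hf, hxf⟩ := mem_polyPts.mp hy
  have hef : e ≠ f := by
    rintro rfl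
    have h1 := hB.shared _ (mem_of_mem_edgesOf he).1 (mem_of_mem_edgesOf hf).1
    have h2 := hB.shared _ (mem_of_mem_edgesOf he).2 (mem_of_mem_edgesOf hf).2
    have := hB.monoL.edge_lt he
    rw [h1, h2] at this
    exact lt_irrefl _ this
  obtain ⟨hxe', hxf'⟩ :=
    hB.noncross e (List.mem_append_left _ he) f (List.mem_append_right _ hf) hef x hxe hxf
  have hxL : x ∈ L := by
    rcases hxe' with rfl | rfl
    exacts [(mem_of_mem_edgesOf he).1, (mem_of_mem_edgesOf he).2]
  have hxR : x ∈ R := by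
    rcases hxf' with rfl | rfl
    exacts [(mem_of_mem_edgesOf hf).1, (mem_of_mem_edgesOf hf).2]
  exact (hB.shared x hxL hxR ▸ h1x).false

lemma extendsTo_append {S : Finset Pt} {ptop : Pt} {A B : List Pt} (hB : IsBipath Si p1 L R)
    (hSis : Si ⊆ S) (hLA : MonoPath (L ++ A)) (hRB : MonoPath (R ++ B))
    (hLA' : (L ++ A).getLast? = some ptop) (hRB' : (R ++ B).getLast? = some ptop)
    (hA : ∀ w ∈ A, w ∈ S \ Si) (hB' : ∀ w ∈ B, w ∈ S \ Si) (hAB : ∀ w ∈ A, w ∈ B → w = ptop)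
    (hcover : ∀ w ∈ S \ Si, w ∈ A ∨ w ∈ B) (hnc : PolyNC (L ++ A) (R ++ B)) :
    ExtendsTo S Si p1 ptop L R (L ++ A) (R ++ B) := by
  have hhead : ∀ {l l' : List Pt}, l.head? = some p1 → (l ++ l').head? = some p1 := fun h => by
    simp [List.head?_append, h]
  refine ⟨⟨hLA, hRB, hhead hB.headL, hhead hB.headR, hLA', hRB', hLA.nodup, hRB.nodup,
    fun p => ⟨fun hp => ?_, fun hp => ?_⟩, fun p hpL hpR => ?_, hnc⟩,
    List.prefix_append _ _, List.prefix_append _ _,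
    fun p hp => ⟨fun hpSi => ?_, hB.mem_of_mem_left⟩,
    fun p hp => ⟨fun hpSi => ?_, hB.mem_of_mem_right⟩⟩
  · by_cases hpSi : p ∈ Si
    · exact ((hB.cover p).mp hpSi).imp (List.mem_append_left _) (List.mem_append_left _)
    · exact (hcover p (Finset.mem_sdiff.mpr ⟨hp, hpSi⟩)).imp
        (List.mem_append_right _) (List.mem_append_right _)
  · rcases hp with hp | hp <;> rcases List.mem_append.mp hp with hp | hp
    exacts [hSis (hB.mem_of_mem_left hp), (Finset.mem_sdiff.mp (hA p hp)).1,
      hSis (hB.mem_of_mem_right hp), (Finset.mem_sdiff.mp (hB' p hp)).1]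
  · rcases List.mem_append.mp hpL with hpL | hpA <;> rcases List.mem_append.mp hpR with hpR | hpB
    · exact Or.inl (hB.shared p hpL hpR)
    · exact absurd (hB.mem_of_mem_left hpL) (Finset.mem_sdiff.mp (hB' p hpB)).2
    · exact absurd (hB.mem_of_mem_right hpR) (Finset.mem_sdiff.mp (hA p hpA)).2
    · exact Or.inr (hAB p hpA hpB)
  · exact (List.mem_append.mp hp).resolve_right fun hpA => (Finset.mem_sdiff.mp (hA p hpA)).2 hpSi
  · exact (List.mem_append.mp hp).resolve_right fun hpB => (Finset.mem_sdiff.mp (hB' p hpB)).2 hpSi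

end IsBipath

lemma IsWrapChain.append_eq_of_mem_edgesOf {S Si : Finset Pt} {p1 ptop pl pr : Pt}
    {L R A ch : List Pt} (hB : IsBipath Si p1 L R)
    (hpl : L.getLast? = some pl) (hpr : R.getLast? = some pr)
    (hch : IsWrapChain S ptop pr ch) (hch_above : ∀ x ∈ ch, pl.2 < x.2)
    (hLA : MonoPath (L ++ A)) (hLA' : (L ++ A).getLast? = some ptop)
    (hL2 : (p1, ptop) ∈ edgesOf (L ++ A)) (hC2 : (p1, ptop) ∈ edgesOf (pr :: ch)) :
    L ++ A = R ++ ch := by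
  have hp1pl : p1.2 ≤ pl.2 := hB.monoL.head_le hB.headL (List.mem_of_getLast? hpl)
  obtain rfl : pr = p1 := by
    rcases List.mem_cons.mp (mem_of_mem_edgesOf hC2).1 with h | h
    · exact h.symm
    · exact absurd (hch_above p1 h) (not_lt.mpr hp1pl)
  have hch2 := hch.monoPath.eq_pair_of_mem_edgesOf rfl hch.getLast? hC2
  rw [List.cons.injEq] at hch2
  rw [hLA.eq_pair_of_mem_edgesOf (by simp [List.head?_append, hB.headL]) hLA' hL2,
    hB.monoR.eq_singleton hB.headR hpr, hch2.2]
  rfl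

lemma IsWrapChain.fst_lt_of_extension {S Si : Finset Pt} (hy : DistinctY S) (hgp : GenPos S)
    {p1 ptop pl pr : Pt} (hT : IsHighest S ptop) {L R A ch : List Pt}
    (hB : IsBipath Si p1 L R) (hSis : Si ⊆ S) (hpl : L.getLast? = some pl)
    (hpr : R.getLast? = some pr) (hprpl : pr = p1 ∨ pr.2 < pl.2)
    (hch : IsWrapChain S ptop pr ch) (hch_above : ∀ x ∈ ch, pl.2 < x.2)
    (hA : MonoPath (pl :: A)) (hLA' : (L ++ A).getLast? = some ptop)
    (hAS : ∀ w ∈ A, w ∈ S \ Si) (hAch : ∀ w ∈ A, w ∈ ch → w = ptop) (hne : L ++ A ≠ R ++ ch)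
    {x y : Pt} (hx : x ∈ polyPts (L ++ A)) (hyR : y ∈ polyPts (R ++ ch)) (hxy : x.2 = y.2)
    (h1x : p1.2 < x.2) (hxT : x.2 < ptop.2) : x.1 < y.1 := by
  have hLA : MonoPath (L ++ A) :=
    hB.monoL.append hA.tail hpl fun w hw => List.rel_of_pairwise_cons hA.pairwise hw
  have hhead : (L ++ A).head? = some p1 := by simp [List.head?_append, hB.headL]
  have hprR := List.mem_of_getLast? hpr
  have hLS : ∀ w ∈ L ++ A, w ∈ S := fun w hw => (List.mem_append.mp hw).elim
    (fun hw => hSis (hB.mem_of_mem_left hw)) fun hw => (Finset.mem_sdiff.mp (hAS w hw)).1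
  have hlow : ∀ x ∈ polyPts (L ++ A), x.2 < pl.2 → x ∈ polyPts L :=
    fun x hx => mem_polyPts_of_mem_polyPts_append hpl hA hx
  rw [polyPts_append hpr] at hyR
  rcases hyR with hyR | hyR
  · have hypr := hB.monoR.le_last_of_mem_polyPts hpr hyR
    have hxpl : x.2 < pl.2 := by rcases hprpl with rfl | hprpl <;> linarith
    exact hB.fst_lt (hlow x hx hxpl) hyR hxy h1x
  refine hch.fst_lt_of_mem_polyPts hy hgp hT hLA hhead hLA' hLS (hSis (hB.mem_of_mem_right hprR))
    (fun w hw hwL => ?_) ?_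
    (fun hL2 hC2 => hne (hch.append_eq_of_mem_edgesOf hB hpl hpr hch_above hLA hLA' hL2 hC2))
    (fun x' hx' hx'pr h1x' => ?_) hx hyR hxy h1x hxT
  · rcases List.mem_append.mp hwL with hwL | hwA
    · exact absurd (hB.monoL.le_last hpl hwL) (not_le.mpr (hch_above w hw))
    · exact hAch w hwA hw
  · by_cases hpr1 : pr = p1
    · exact Or.inl hpr1
    · refine Or.inr fun hprL => ?_
      rcases List.mem_append.mp hprL with hprL | hprA
      · exact hpr1 (hB.shared pr hprL hprR)
      · exact (Finset.mem_sdiff.mp (hAS pr hprA)).2 (hB.mem_of_mem_right hprR)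
  · have hpr1 : pr ≠ p1 := fun h => by rw [hx'pr, h] at h1x'; exact lt_irrefl _ h1x'
    exact hB.fst_lt (hlow x' hx' (hx'pr ▸ hprpl.resolve_left hpr1))
      (mem_polyPts_of_mem hprR (List.mem_of_mem_head? hB.headR) hpr1) hx'pr h1x'

lemma IsWrapChain.polyNC_append {S Si : Finset Pt} (hy : DistinctY S) (hgp : GenPos S)
    {p1 ptop pl pr : Pt} (hT : IsHighest S ptop) {L R A ch : List Pt}
    (hB : IsBipath Si p1 L R) (hSis : Si ⊆ S) (hpl : L.getLast? = some pl)
    (hpr : R.getLast? = some pr) (hprpl : pr = p1 ∨ pr.2 < pl.2)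
    (hch : IsWrapChain S ptop pr ch) (hch_above : ∀ x ∈ ch, pl.2 < x.2)
    (hA : MonoPath (pl :: A)) (hLA' : (L ++ A).getLast? = some ptop)
    (hRB' : (R ++ ch).getLast? = some ptop)
    (hAS : ∀ w ∈ A, w ∈ S \ Si) (hAch : ∀ w ∈ A, w ∈ ch → w = ptop) :
    PolyNC (L ++ A) (R ++ ch) := by
  have hLA : MonoPath (L ++ A) :=
    hB.monoL.append hA.tail hpl fun w hw => List.rel_of_pairwise_cons hA.pairwise hw
  have hRB := hB.monoR.append hch.monoPath.tail hpr fun x hx => (hch.mem hx).2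
  by_cases hne : L ++ A = R ++ ch
  · rw [hne]
    exact PolyNC.self hRB
  exact PolyNC.of_sep hLA hRB (by simp [List.head?_append, hB.headL])
    (by simp [List.head?_append, hB.headR]) hLA' hRB' fun x hx y hy' hxy h1x hxT =>
      hch.fst_lt_of_extension hy hgp hT hB hSis hpl hpr hprpl hch_above hA hLA' hAS hAch hne
        hx hy' hxy h1x hxT

theorem exists_extendsTo_of_wrapChain {S Si : Finset Pt} (hy : DistinctY S) (hgp : GenPos S)
    {p1 ptop pl pr : Pt} (hT : IsHighest S ptop) (hSis : Si ⊆ S)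
    (hTSi : ptop ∉ Si) (hSilow : ∀ p ∈ Si, ∀ q ∈ S, q ∉ Si → p.2 < q.2) {L R ch : List Pt}
    (hB : IsBipath Si p1 L R) (hpl : L.getLast? = some pl) (hpr : R.getLast? = some pr)
    (hprpl : pr = p1 ∨ pr.2 < pl.2) (hch : IsWrapChain S ptop pr ch)
    (hch_above : ∀ x ∈ ch, pl.2 < x.2) :
    ∃ L' R', ExtendsTo S Si p1 ptop L R L' R' := by
  classical
  have hplSi := hB.mem_of_mem_left (List.mem_of_getLast? hpl)
  have hprSi := hB.mem_of_mem_right (List.mem_of_getLast? hpr)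
  have hprpl' : pr.2 ≤ pl.2 := by
    rcases hprpl with rfl | hprpl
    exacts [hB.monoL.head_le hB.headL (List.mem_of_getLast? hpl), hprpl.le]
  obtain ⟨A, hA, hAK⟩ := DistinctY.exists_monoPath (T := (S \ Si).filter fun p => p ∈ ch → p = ptop)
    (hy.mono ((Finset.filter_subset _ _).trans Finset.sdiff_subset))
  have hAS : ∀ w ∈ A, w ∈ S \ Si := fun w hw => (Finset.mem_filter.mp ((hAK w).mp hw)).1
  have hTA : ptop ∈ A :=
    (hAK ptop).mpr (Finset.mem_filter.mpr ⟨Finset.mem_sdiff.mpr ⟨hT.1, hTSi⟩, fun _ => rfl⟩)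
  have hA_above : ∀ w ∈ A, pl.2 < w.2 := fun w hw =>
    hSilow pl hplSi w (Finset.mem_sdiff.mp (hAS w hw)).1 (Finset.mem_sdiff.mp (hAS w hw)).2
  have hch_last := hch.getLast?_of_ne fun h => hTSi (h ▸ hprSi)
  have hLA' : (L ++ A).getLast? = some ptop := by
    rw [List.getLast?_append_of_ne_nil _ (List.ne_nil_of_mem hTA),
      hA.getLast?_eq_of_isHighest hT (fun w hw => (Finset.mem_sdiff.mp (hAS w hw)).1) hTA]
  have hRB' : (R ++ ch).getLast? = some ptop := by
    rw [List.getLast?_append_of_ne_nil _ (List.ne_nil_of_mem (List.mem_of_getLast? hch_last)),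
      hch_last]
  have hAch : ∀ w ∈ A, w ∈ ch → w = ptop := fun w hw => (Finset.mem_filter.mp ((hAK w).mp hw)).2
  refine ⟨L ++ A, R ++ ch, hB.extendsTo_append hSis (hB.monoL.append hA hpl hA_above)
    (hB.monoR.append hch.monoPath.tail hpr fun x hx => (hch.mem hx).2) hLA' hRB' hAS
    (fun w hw => Finset.mem_sdiff.mpr ⟨(hch.mem hw).1, fun hwSi =>
      (hch_above w hw).not_ge (hB.snd_le_of_mem hpl hpr hprpl' hwSi)⟩) hAch
    (fun w hw => (em (w ∈ ch)).symm.imp_left fun hwch =>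
      (hAK w).mpr (Finset.mem_filter.mpr ⟨hw, fun h => absurd h hwch⟩))
    (hch.polyNC_append hy hgp hT hB hSis hpl hpr hprpl hch_above
      (MonoPath.append (l := [pl]) (List.isChain_singleton pl) hA rfl hA_above) hLA' hRB' hAS
      hAch)⟩

/-- If the first wrap vertex `m` from `pr` lay in the band `(pr.2, pl.2]`, the rightmost ray of the
band would be the ray `pr m`, and the point `z` right of it would contradict the choice of `m`. -/
lemma IsWrapChain.snd_lt_of_safe {S : Finset Pt} (hgp : GenPos S) {ptop pl pr r z : Pt}
    {ch : List Pt} (hch : IsWrapChain S ptop pr ch) (hpr : pr ∈ S) (hr : r ∈ S)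
    (hr1 : pr.2 < r.2) (hr2 : r.2 ≤ pl.2)
    (hband : ∀ q ∈ S, pr.2 < q.2 → q.2 ≤ pl.2 → 0 ≤ xprod pr r q)
    (hz : z ∈ S) (hz1 : xprod pr r z < 0) (hz2 : pl.2 < z.2) : ∀ x ∈ ch, pl.2 < x.2 := by
  cases hch with
  | nil => simp
  | @cons _ m tl hm hprm hwrap htl =>
    have hmpl : pl.2 < m.2 := by
      by_contra! hmpl
      by_cases hrm : r = m
      · subst hrm
        linarith [hwrap z hz (by linarith)]
      · refine hgp pr hpr r hr m hm (ne_of_apply_ne Prod.snd hr1.ne)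
          (ne_of_apply_ne Prod.snd hprm.ne) hrm ?_
        have hswap : xprod pr m r = -xprod pr r m := by simp only [xprod]; ring
        linarith [hband m hm hprm hmpl, hwrap r hr hr1]
    intro x hx
    rcases List.mem_cons.mp hx with rfl | hx
    exacts [hmpl, hmpl.trans (htl.mem hx).2]

theorem exists_extendsTo_of_safe_left_higher {S Si : Finset Pt} (hy : DistinctY S) (hgp : GenPos S)
    {p1 ptop pl pr : Pt} (hT : IsHighest S ptop) (hSis : Si ⊆ S)
    (hTSi : ptop ∉ Si) (hSilow : ∀ p ∈ Si, ∀ q ∈ S, q ∉ Si → p.2 < q.2) {L R : List Pt}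
    (hB : IsBipath Si p1 L R) (hpl : L.getLast? = some pl) (hpr : R.getLast? = some pr)
    {r z : Pt} (hr : r ∈ S) (hr1 : pr.2 < r.2) (hr2 : r.2 ≤ pl.2)
    (hband : ∀ q ∈ S, pr.2 < q.2 → q.2 ≤ pl.2 → 0 ≤ xprod pr r q)
    (hz : z ∈ S) (hz1 : xprod pr r z < 0) (hz2 : pl.2 < z.2) :
    ∃ L' R', ExtendsTo S Si p1 ptop L R L' R' := by
  have hprS := hSis (hB.mem_of_mem_right (List.mem_of_getLast? hpr))
  obtain ⟨ch, hch⟩ := IsWrapChain.exists_of_mem hT hprS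
  exact exists_extendsTo_of_wrapChain hy hgp hT hSis hTSi hSilow hB hpl hpr
    (Or.inr (hr1.trans_le hr2)) hch (hch.snd_lt_of_safe hgp hprS hr hr1 hr2 hband hz hz1 hz2)

/-! ### Reflection -/

def reflect (p : Pt) : Pt := (-p.1, p.2)

@[simp] lemma reflect_fst (p : Pt) : (reflect p).1 = -p.1 := rfl

@[simp] lemma reflect_snd (p : Pt) : (reflect p).2 = p.2 := rfl

@[simp] lemma reflect_reflect (p : Pt) : reflect (reflect p) = p := by simp [reflect]

lemma reflect_involutive : Function.Involutive reflect := reflect_reflect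

@[simp] lemma reflect_inj {p q : Pt} : reflect p = reflect q ↔ p = q :=
  reflect_involutive.injective.eq_iff

@[simp] lemma reflect_comp_reflect : reflect ∘ reflect = id := funext reflect_reflect

@[simp] lemma xprod_reflect (o a b : Pt) :
    xprod (reflect o) (reflect a) (reflect b) = -xprod o a b := by
  simp only [xprod, reflect]; ring

lemma mem_Seg_reflect_iff {p q x : Pt} : x ∈ Seg (reflect p) (reflect q) ↔ reflect x ∈ Seg p q := by
  simp only [mem_Seg_iff, reflect_fst, reflect_snd]
  refine exists_congr fun t => and_congr_right' (and_congr_right' (and_congr_left' ?_))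
  constructor <;> intro h <;> linarith

lemma mem_image_reflect {T : Finset Pt} {x : Pt} : x ∈ T.image reflect ↔ reflect x ∈ T := by
  rw [Finset.mem_image]
  exact ⟨fun ⟨y, hy, hyx⟩ => hyx ▸ (reflect_reflect y).symm ▸ hy,
    fun h => ⟨_, h, reflect_reflect x⟩⟩

lemma mem_map_reflect {l : List Pt} {x : Pt} : x ∈ l.map reflect ↔ reflect x ∈ l :=
  List.mem_map_of_involutive reflect_involutive

lemma edgesOf_map (f : Pt → Pt) (l : List Pt) :
    edgesOf (l.map f) = (edgesOf l).map (Prod.map f f) := by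
  rw [edgesOf, edgesOf, ← List.map_tail, List.zip_map]

lemma mem_polyPts_map_reflect {l : List Pt} {x : Pt} :
    x ∈ polyPts (l.map reflect) ↔ reflect x ∈ polyPts l := by
  rw [mem_polyPts, mem_polyPts, edgesOf_map]
  simp only [List.mem_map, exists_exists_and_eq_and, Prod.map_fst, Prod.map_snd,
    mem_Seg_reflect_iff]

lemma MonoPath.map_reflect {l : List Pt} (h : MonoPath l) : MonoPath (l.map reflect) :=
  (List.isChain_map reflect).mpr h

lemma SegNC.map_reflect {e f : Pt × Pt} (h : SegNC e f) :
    SegNC (Prod.map reflect reflect e) (Prod.map reflect reflect f) := by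
  intro x hxe hxf
  rw [Prod.map_fst, Prod.map_snd, mem_Seg_reflect_iff] at hxe hxf
  simp only [Prod.map_fst, Prod.map_snd, ← reflect_involutive.eq_iff]
  exact h _ hxe hxf

lemma PolyNC.map_reflect {A B : List Pt} (h : PolyNC A B) :
    PolyNC (B.map reflect) (A.map reflect) := by
  have key : ∀ g ∈ edgesOf (B.map reflect) ++ edgesOf (A.map reflect),
      ∃ g₀ ∈ edgesOf A ++ edgesOf B, g = Prod.map reflect reflect g₀ := by
    intro g hg
    simp only [edgesOf_map, List.mem_append, List.mem_map] at hg
    rcases hg with ⟨g₀, hg₀, rfl⟩ | ⟨g₀, hg₀, rfl⟩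
    exacts [⟨g₀, List.mem_append_right _ hg₀, rfl⟩, ⟨g₀, List.mem_append_left _ hg₀, rfl⟩]
  intro e he f hf hef
  obtain ⟨e₀, he₀, rfl⟩ := key e he
  obtain ⟨f₀, hf₀, rfl⟩ := key f hf
  exact (h e₀ he₀ f₀ hf₀ fun h => hef (h ▸ rfl)).map_reflect

lemma DistinctY.image_reflect {S : Finset Pt} (h : DistinctY S) : DistinctY (S.image reflect) := by
  intro p hp q hq hpq
  rw [mem_image_reflect] at hp hq
  exact reflect_inj.mp (h _ hp _ hq hpq)

lemma GenPos.image_reflect {S : Finset Pt} (h : GenPos S) : GenPos (S.image reflect) := by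
  intro p hp q hq s hs hpq hps hqs
  rw [mem_image_reflect] at hp hq hs
  have := xprod_reflect (reflect p) (reflect q) (reflect s)
  simp only [reflect_reflect] at this
  rw [this, neg_ne_zero]
  exact h _ hp _ hq _ hs (reflect_inj.not.mpr hpq) (reflect_inj.not.mpr hps)
    (reflect_inj.not.mpr hqs)

lemma IsHighest.image_reflect {S : Finset Pt} {p : Pt} (h : IsHighest S p) :
    IsHighest (S.image reflect) (reflect p) :=
  ⟨mem_image_reflect.mpr (by simpa using h.1), fun q hq hqp =>
    h.2 (reflect q) (mem_image_reflect.mp hq) (reflect_involutive.eq_iff.not.mpr hqp)⟩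

lemma IsNCMonoHamCycle.map_reflect {S : Finset Pt} {ps pt : Pt} {L R : List Pt}
    (h : IsNCMonoHamCycle S ps pt L R) :
    IsNCMonoHamCycle (S.image reflect) (reflect ps) (reflect pt) (R.map reflect)
      (L.map reflect) where
  monoL := h.monoR.map_reflect
  monoR := h.monoL.map_reflect
  headL := by simp [h.headR]
  headR := by simp [h.headL]
  lastL := by simp [h.lastR]
  lastR := by simp [h.lastL]
  nodupL := h.nodupR.map reflect_involutive.injective
  nodupR := h.nodupL.map reflect_involutive.injective
  cover p := by rw [mem_image_reflect, mem_map_reflect, mem_map_reflect, h.cover, or_comm]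
  shared p hpR hpL := by
    simp only [← reflect_involutive.eq_iff]
    exact h.shared _ (mem_map_reflect.mp hpL) (mem_map_reflect.mp hpR)
  noncross := h.noncross.map_reflect

lemma IsBipath.map_reflect {Si : Finset Pt} {p1 : Pt} {L R : List Pt} (h : IsBipath Si p1 L R) :
    IsBipath (Si.image reflect) (reflect p1) (R.map reflect) (L.map reflect) where
  monoL := h.monoR.map_reflect
  monoR := h.monoL.map_reflect
  headL := by simp [h.headR]
  headR := by simp [h.headL]
  nodupL := h.nodupR.map reflect_involutive.injective
  nodupR := h.nodupL.map reflect_involutive.injective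
  cover p := by rw [mem_image_reflect, mem_map_reflect, mem_map_reflect, h.cover, or_comm]
  shared p hpR hpL := by
    rw [← reflect_involutive.eq_iff]
    exact h.shared _ (mem_map_reflect.mp hpL) (mem_map_reflect.mp hpR)
  noncross := h.noncross.map_reflect
  leftOf p hp q hq hpq h1p hne := by
    have := h.leftOf _ (mem_polyPts_map_reflect.mp hq) _ (mem_polyPts_map_reflect.mp hp) hpq.symm
      (hpq ▸ h1p) (reflect_inj.not.mpr (Ne.symm hne))
    simp only [reflect_fst] at this
    linarith

lemma ExtendsTo.map_reflect {S Si : Finset Pt} {ps pt : Pt} {L R L' R' : List Pt}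
    (h : ExtendsTo S Si ps pt L R L' R') :
    ExtendsTo (S.image reflect) (Si.image reflect) (reflect ps) (reflect pt) (R.map reflect)
      (L.map reflect) (R'.map reflect) (L'.map reflect) := by
  obtain ⟨hC, hL, hR, hresL, hresR⟩ := h
  refine ⟨hC.map_reflect, hR.map _, hL.map _, fun p hp => ?_, fun p hp => ?_⟩
  · rw [mem_image_reflect, mem_map_reflect]
    exact hresR _ (mem_map_reflect.mp hp)
  · rw [mem_image_reflect, mem_map_reflect]
    exact hresL _ (mem_map_reflect.mp hp)

theorem exists_extendsTo_of_safe_right_higher {S Si : Finset Pt} (hy : DistinctY S)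
    (hgp : GenPos S) {p1 ptop pl pr : Pt} (hT : IsHighest S ptop)
    (hSis : Si ⊆ S) (hTSi : ptop ∉ Si) (hSilow : ∀ p ∈ Si, ∀ q ∈ S, q ∉ Si → p.2 < q.2)
    {L R : List Pt} (hB : IsBipath Si p1 L R) (hpl : L.getLast? = some pl)
    (hpr : R.getLast? = some pr) {r z : Pt} (hr : r ∈ S) (hr1 : pl.2 < r.2) (hr2 : r.2 ≤ pr.2)
    (hband : ∀ q ∈ S, pl.2 < q.2 → q.2 ≤ pr.2 → xprod pl r q ≤ 0)
    (hz : z ∈ S) (hz1 : 0 < xprod pl r z) (hz2 : pr.2 < z.2) :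
    ∃ L' R', ExtendsTo S Si p1 ptop L R L' R' := by
  obtain ⟨L', R', h⟩ := exists_extendsTo_of_safe_left_higher hy.image_reflect hgp.image_reflect
    hT.image_reflect (Finset.image_subset_image hSis)
    (fun h => hTSi (by simpa using mem_image_reflect.mp h))
    (fun p hp q hq hqSi => hSilow _ (mem_image_reflect.mp hp) (reflect q)
      (mem_image_reflect.mp hq) fun h => hqSi (mem_image_reflect.mpr h))
    hB.map_reflect (pl := reflect pr) (pr := reflect pl) (by simp [hpr]) (by simp [hpl])
    (r := reflect r) (z := reflect z) (mem_image_reflect.mpr (by simpa using hr)) hr1 hr2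
    (fun q hq h1q hq2 => by
      rw [← reflect_reflect q, xprod_reflect]
      linarith [hband _ (mem_image_reflect.mp hq) h1q hq2])
    (mem_image_reflect.mpr (by simpa using hz)) (by rw [xprod_reflect]; linarith) hz2
  refine ⟨R'.map reflect, L'.map reflect, ?_⟩
  simpa [Finset.image_image, List.map_map] using h.map_reflect

theorem stmt_11_general (S : Finset Pt) (n : ℕ) (hn : S.card = n) (hy : DistinctY S)
    (hgp : GenPos S)
    (p1 ptop : Pt) (h1 : IsLowest S p1) (hT : IsHighest S ptop)
    (i : ℕ) (hin : i ≤ n - 1)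
    (Si : Finset Pt) (hSis : Si ⊆ S) (hSic : Si.card = i)
    (hSilow : ∀ p ∈ Si, ∀ q ∈ S, q ∉ Si → p.2 < q.2)
    (L R : List Pt) (hB : IsBipath Si p1 L R)
    (pl pr : Pt) (hpl : L.getLast? = some pl) (hpr : R.getLast? = some pr)
    (hsafe : i = 1 ∨
      (pr.2 < pl.2 ∧ ∃ r ∈ S, pr.2 < r.2 ∧ r.2 ≤ pl.2 ∧
        (∀ q ∈ S, pr.2 < q.2 → q.2 ≤ pl.2 → 0 ≤ xprod pr r q) ∧
        ∃ z ∈ S, xprod pr r z < 0 ∧ pl.2 < z.2) ∨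
      (pl.2 < pr.2 ∧ ∃ r ∈ S, pl.2 < r.2 ∧ r.2 ≤ pr.2 ∧
        (∀ q ∈ S, pl.2 < q.2 → q.2 ≤ pr.2 → xprod pl r q ≤ 0) ∧
        ∃ z ∈ S, 0 < xprod pl r z ∧ pr.2 < z.2)) :
    ∃ L' R' : List Pt, ExtendsTo S Si p1 ptop L R L' R' := by
  have hp1Si : p1 ∈ Si := hB.mem_of_mem_left (List.mem_of_mem_head? hB.headL)
  have hTSi : ptop ∉ Si := by
    intro hTSi
    obtain ⟨q, hqS, hqSi⟩ : ∃ q ∈ S, q ∉ Si := by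
      by_contra! hSSi
      have := Finset.card_le_card (show S ⊆ Si from hSSi)
      have := Finset.card_pos.mpr ⟨p1, h1.1⟩
      omega
    exact (hSilow ptop hTSi q hqS hqSi).not_ge (hT.snd_le hqS)
  rcases hsafe with hi | ⟨-, r, hr, hr1, hr2, hband, z, hz, hz1, hz2⟩ |
    ⟨-, r, hr, hr1, hr2, hband, z, hz, hz1, hz2⟩
  · have hone : ∀ a ∈ Si, a = p1 := fun a ha =>
      Finset.card_le_one.mp (hSic.trans hi).le a ha p1 hp1Si
    obtain rfl := hone pl (hB.mem_of_mem_left (List.mem_of_getLast? hpl))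
    obtain rfl := hone pr (hB.mem_of_mem_right (List.mem_of_getLast? hpr))
    obtain ⟨ch, hch⟩ := IsWrapChain.exists_of_mem hT h1.1
    exact exists_extendsTo_of_wrapChain hy hgp hT hSis hTSi hSilow hB hpl hpr (Or.inl rfl) hch
      fun x hx => (hch.mem hx).2
  · exact exists_extendsTo_of_safe_left_higher hy hgp hT hSis hTSi hSilow hB hpl hpr hr hr1
      hr2 hband hz hz1 hz2
  · exact exists_extendsTo_of_safe_right_higher hy hgp hT hSis hTSi hSilow hB hpl hpr hr hr1
      hr2 hband hz hz1 hz2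

/-- a safe bipath extends to a non-crossing monotone Hamiltonian
cycle on `S`. -/
theorem stmt_11 (S : Finset Pt) (n : ℕ) (hn : S.card = n) (hy : DistinctY S)
    (hgp : GenPos S)
    (p1 ptop : Pt) (h1 : IsLowest S p1) (hT : IsHighest S ptop)
    (i : ℕ) (hi1 : 1 ≤ i) (hin : i ≤ n - 1)
    (Si : Finset Pt) (hSis : Si ⊆ S) (hSic : Si.card = i)
    (hSilow : ∀ p ∈ Si, ∀ q ∈ S, q ∉ Si → p.2 < q.2)
    (L R : List Pt) (hB : IsBipath Si p1 L R)
    (pl pr : Pt) (hpl : L.getLast? = some pl) (hpr : R.getLast? = some pr)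
    (hsafe : i = 1 ∨
      (pr.2 < pl.2 ∧ ∃ r ∈ S, pr.2 < r.2 ∧ r.2 ≤ pl.2 ∧
        (∀ q ∈ S, pr.2 < q.2 → q.2 ≤ pl.2 → 0 ≤ xprod pr r q) ∧
        ∃ z ∈ S, xprod pr r z < 0 ∧ pl.2 < z.2) ∨
      (pl.2 < pr.2 ∧ ∃ r ∈ S, pl.2 < r.2 ∧ r.2 ≤ pr.2 ∧
        (∀ q ∈ S, pl.2 < q.2 → q.2 ≤ pr.2 → xprod pl r q ≤ 0) ∧
        ∃ z ∈ S, 0 < xprod pl r z ∧ pr.2 < z.2)) :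
    ∃ L' R' : List Pt, ExtendsTo S Si p1 ptop L R L' R' :=
  stmt_11_general S n hn hy hgp p1 ptop h1 hT i hin Si hSis hSic hSilow L R hB pl pr hpl hpr hsafe
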